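/- Let D be a nonzero real number. Then SL₂(ℝ) acts transitively on the set of integer-matrix binary cubic forms over ℝ with reduced discriminant D: for any two quadruples (a,b,c,d), (a′,b′,c′,d′) ∈ ℝ⁴ whose associated forms both have reduced discriminant D, there exists γ ∈ SL₂(ℝ) with γ·f = f′. In other words, for every nonzero k ∈ ℝ there is exactly one SL₂(ℝ)-orbit of binary cubic forms of discriminant 4k over ℝ. -/

import Mathlib

/-!
STATEMENT 14: For any nonzero real number D, the group SL₂(ℝ) acts transitively on the
set of integer-matrix binary cubic forms over ℝ with reduced discriminant D: there is
exactly one SL₂(ℝ)-orbit of binary cubic forms of each nonzero discriminant over ℝ.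
-/

open Matrix MatrixGroups

/-- An (integer-matrix) binary cubic form over `R`: the quadruple `(a,b,c,d)` stands for
`f(x,y) = a·x³ + 3b·x²y + 3c·xy² + d·y³`. -/
abbrev BCF (R : Type*) := R × R × R × R

/-- The reduced discriminant `disc(f) = a²d² − 3b²c² − 6abcd + 4ac³ + 4b³d` of the
integer-matrix binary cubic form `(a,b,c,d)`. -/
def bcfDisc {R : Type*} [CommRing R] (f : BCF R) : R :=
  f.1 ^ 2 * f.2.2.2 ^ 2 - 3 * f.2.1 ^ 2 * f.2.2.1 ^ 2
    - 6 * f.1 * f.2.1 * f.2.2.1 * f.2.2.2 + 4 * f.1 * f.2.2.1 ^ 3 + 4 * f.2.1 ^ 3 * f.2.2.2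

/-- The value `f(x,y)` of the integer-matrix binary cubic form `f = (a,b,c,d)`. -/
def bcfVal {R : Type*} [CommRing R] (f : BCF R) (x y : R) : R :=
  f.1 * x ^ 3 + 3 * f.2.1 * x ^ 2 * y + 3 * f.2.2.1 * x * y ^ 2 + f.2.2.2 * y ^ 3

/-- The action of a 2×2 matrix `γ = ((p,q),(r,s))` on integer-matrix binary cubic forms
by linear change of variable, `(γ·f)(x,y) = f(px+qy, rx+sy)`, written in coordinates. -/
def bcfAct {R : Type*} [CommRing R] (γ : Matrix (Fin 2) (Fin 2) R) (f : BCF R) : BCF R :=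
  (f.1 * γ 0 0 ^ 3 + 3 * f.2.1 * γ 0 0 ^ 2 * γ 1 0 + 3 * f.2.2.1 * γ 0 0 * γ 1 0 ^ 2
     + f.2.2.2 * γ 1 0 ^ 3,
   f.1 * γ 0 0 ^ 2 * γ 0 1 + f.2.1 * (γ 0 0 ^ 2 * γ 1 1 + 2 * γ 0 0 * γ 0 1 * γ 1 0)
     + f.2.2.1 * (2 * γ 0 0 * γ 1 0 * γ 1 1 + γ 0 1 * γ 1 0 ^ 2) + f.2.2.2 * γ 1 0 ^ 2 * γ 1 1,
   f.1 * γ 0 0 * γ 0 1 ^ 2 + f.2.1 * (2 * γ 0 0 * γ 0 1 * γ 1 1 + γ 0 1 ^ 2 * γ 1 0)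
     + f.2.2.1 * (γ 0 0 * γ 1 1 ^ 2 + 2 * γ 0 1 * γ 1 0 * γ 1 1) + f.2.2.2 * γ 1 0 * γ 1 1 ^ 2,
   f.1 * γ 0 1 ^ 3 + 3 * f.2.1 * γ 0 1 ^ 2 * γ 1 1 + 3 * f.2.2.1 * γ 0 1 * γ 1 1 ^ 2
     + f.2.2.2 * γ 1 1 ^ 3)

/-- The action is by substitution: `(γ·f)(x,y) = f(px+qy, rx+sy)`. -/
theorem bcfAct_val {R : Type*} [CommRing R] (γ : Matrix (Fin 2) (Fin 2) R) (f : BCF R)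
    (x y : R) : bcfVal (bcfAct γ f) x y
      = bcfVal f (γ 0 0 * x + γ 0 1 * y) (γ 1 0 * x + γ 1 1 * y) := by
  simp only [bcfAct, bcfVal]; ring

theorem bcfAct_one {R : Type*} [CommRing R] (f : BCF R) : bcfAct (1 : Matrix (Fin 2) (Fin 2) R) f = f := by
  obtain ⟨a, b, c, d⟩ := f
  simp [bcfAct, Matrix.one_apply]

theorem bcfAct_mul {R : Type*} [CommRing R] (g h : Matrix (Fin 2) (Fin 2) R) (f : BCF R) :
    bcfAct (g * h) f = bcfAct h (bcfAct g f) := by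
  obtain ⟨a, b, c, d⟩ := f
  simp only [bcfAct, Matrix.mul_apply, Fin.sum_univ_two, Prod.mk.injEq]
  refine ⟨by ring, by ring, by ring, by ring⟩

/-!
The reduced discriminant is an `SL₂`-invariant, so it suffices to move every form of nonzero
discriminant `D` to the normal form `(0, 1, 0, D / 4)`, i.e. `3x²y + (D/4)·y³`. Over `ℝ` the
cubic `f(t, 1)` has a root `t`, and a matrix with first column `(t, 1)` kills the leading
coefficient. A form `(0, b, c, d)` has discriminant `b²(4bd − 3c²)`, so `b ≠ 0`; the matrix
`((b⁻¹, -c/2), (0, b))` then gives the normal form.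
-/

open Filter Polynomial

theorem bcfDisc_bcfAct {R : Type*} [CommRing R] (γ : Matrix (Fin 2) (Fin 2) R) (f : BCF R) :
    bcfDisc (bcfAct γ f) = γ.det ^ 6 * bcfDisc f := by
  obtain ⟨a, b, c, d⟩ := f
  simp only [bcfDisc, bcfAct, det_fin_two]
  ring

theorem bcfDisc_bcfAct_SL {R : Type*} [CommRing R] (γ : SL(2, R)) (f : BCF R) :
    bcfDisc (bcfAct (γ : Matrix (Fin 2) (Fin 2) R) f) = bcfDisc f := by
  rw [bcfDisc_bcfAct, γ.det_coe, one_pow, one_mul]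

theorem bcfAct_fst {R : Type*} [CommRing R] (γ : Matrix (Fin 2) (Fin 2) R) (f : BCF R) :
    (bcfAct γ f).1 = bcfVal f (γ 0 0) (γ 1 0) :=
  rfl

theorem tendsto_monic_cubic_atTop (b c e : ℝ) :
    Tendsto (fun t : ℝ => t ^ 3 + b * t ^ 2 + c * t + e) atTop atTop := by
  have hdeg : (X ^ 3 + C b * X ^ 2 + C c * X + C e : ℝ[X]).natDegree = 3 := by compute_degree!
  have hmonic : (X ^ 3 + C b * X ^ 2 + C c * X + C e : ℝ[X]).Monic := by monicity!
  convert tendsto_atTop_of_leadingCoeff_nonneg (X ^ 3 + C b * X ^ 2 + C c * X + C e)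
    (natDegree_pos_iff_degree_pos.mp (by omega)) (hmonic.leadingCoeff ▸ zero_le_one) using 2
  simp

theorem exists_monic_cubic_eq_zero (b c e : ℝ) :
    ∃ t : ℝ, t ^ 3 + b * t ^ 2 + c * t + e = 0 := by
  have hbot : Tendsto (fun t : ℝ => t ^ 3 + b * t ^ 2 + c * t + e) atBot atBot := by
    refine (tendsto_neg_atTop_atBot.comp
      ((tendsto_monic_cubic_atTop (-b) c (-e)).comp tendsto_neg_atBot_atTop)).congr fun t => ?_
    simp only [Function.comp_apply]
    ring
  exact Continuous.surjective (by fun_prop) (tendsto_monic_cubic_atTop b c e) hbot 0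

theorem exists_SL_bcfAct_fst_eq_zero (f : BCF ℝ) :
    ∃ γ : SL(2, ℝ), (bcfAct (γ : Matrix (Fin 2) (Fin 2) ℝ) f).1 = 0 := by
  obtain ⟨a, b, c, d⟩ := f
  by_cases ha : a = 0
  · exact ⟨1, by rw [Matrix.SpecialLinearGroup.coe_one, bcfAct_one, ha]⟩
  obtain ⟨t, ht⟩ := exists_monic_cubic_eq_zero (3 * b / a) (3 * c / a) (d / a)
  refine ⟨⟨!![t, -1; 1, 0], by simp [det_fin_two_of]⟩, ?_⟩
  have hval :
      bcfVal (a, b, c, d) t 1 = a * (t ^ 3 + 3 * b / a * t ^ 2 + 3 * c / a * t + d / a) := by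
    simp only [bcfVal]
    field_simp
  simpa [bcfAct_fst, ht] using hval

theorem exists_SL_bcfAct_eq_normalForm_of_fst_eq_zero (b c d : ℝ)
    (hdisc : bcfDisc ((0 : ℝ), b, c, d) ≠ 0) :
    ∃ γ : SL(2, ℝ), bcfAct (γ : Matrix (Fin 2) (Fin 2) ℝ) (0, b, c, d)
      = (0, 1, 0, bcfDisc ((0 : ℝ), b, c, d) / 4) := by
  have hdisc_eq : bcfDisc ((0 : ℝ), b, c, d) = b ^ 2 * (4 * b * d - 3 * c ^ 2) := by
    simp only [bcfDisc]
    ring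
  have hb : b ≠ 0 := by
    rintro rfl
    simp [hdisc_eq] at hdisc
  refine ⟨⟨!![b⁻¹, -(c / 2); 0, b], by simp [det_fin_two_of, hb]⟩, ?_⟩
  simp only [bcfAct, hdisc_eq, of_apply, cons_val', cons_val_zero,
    cons_val_one, cons_val_fin_one, Prod.mk.injEq]
  refine ⟨by ring, ?_, ?_, ?_⟩ <;> field_simp <;> ring

theorem exists_SL_bcfAct_eq_normalForm (f : BCF ℝ) (hdisc : bcfDisc f ≠ 0) :
    ∃ γ : SL(2, ℝ), bcfAct (γ : Matrix (Fin 2) (Fin 2) ℝ) f = (0, 1, 0, bcfDisc f / 4) := by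
  obtain ⟨γ₁, hγ₁⟩ := exists_SL_bcfAct_fst_eq_zero f
  set g := bcfAct (γ₁ : Matrix (Fin 2) (Fin 2) ℝ) f with hg
  have hg_disc : bcfDisc g = bcfDisc f := bcfDisc_bcfAct_SL γ₁ f
  have hg_eq : g = (0, g.2.1, g.2.2.1, g.2.2.2) := by rw [← hγ₁]
  obtain ⟨γ₂, hγ₂⟩ := exists_SL_bcfAct_eq_normalForm_of_fst_eq_zero g.2.1 g.2.2.1 g.2.2.2
    (by rwa [← hg_eq, hg_disc])
  refine ⟨γ₁ * γ₂, ?_⟩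
  rw [Matrix.SpecialLinearGroup.coe_mul, bcfAct_mul, ← hg, hg_eq, hγ₂, ← hg_eq, hg_disc]

theorem SL2R_transitive_on_fixed_disc (D : ℝ) (hD : D ≠ 0) (f f' : BCF ℝ)
    (hf : bcfDisc f = D) (hf' : bcfDisc f' = D) :
    ∃ γ : Matrix.SpecialLinearGroup (Fin 2) ℝ, bcfAct (γ : Matrix (Fin 2) (Fin 2) ℝ) f = f' := by
  obtain ⟨γ, hγ⟩ := exists_SL_bcfAct_eq_normalForm f (hf ▸ hD)
  obtain ⟨γ', hγ'⟩ := exists_SL_bcfAct_eq_normalForm f' (hf' ▸ hD)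
  refine ⟨γ * γ'⁻¹, ?_⟩
  rw [Matrix.SpecialLinearGroup.coe_mul, bcfAct_mul, hγ, hf, ← hf', ← hγ', ← bcfAct_mul,
    ← Matrix.SpecialLinearGroup.coe_mul, mul_inv_cancel, Matrix.SpecialLinearGroup.coe_one,
    bcfAct_one]
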